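/- Let T be an invertible element of the algebra E of column-finite N×N matrices over F such that T⁻¹ c T − c* ∈ M_∞(F), where c = Σ e_{i+1,i} and c* = Σ e_{i,i+1}. Then a contradiction arises: no such T exists. (Equivalently: if T ∈ E is invertible and cT − Tc* is finitary, then T is not invertible or T is finitary, which is impossible.) -/

import Mathlib

noncomputable section

/-- The algebra `E` of column-finite `ℕ × ℕ` matrices over `F`, realized as the
algebra of all `F`-linear endomorphisms of the free module `⊕_{i ∈ ℕ} F eᵢ`. -/
abbrev EMat (F : Type*) [Field F] := Module.End F (ℕ →₀ F)

/-- The `(i,j)` entry of (the matrix of) an endomorphism `f`. -/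
def entry {F : Type*} [Field F] (f : EMat F) (i j : ℕ) : F :=
  f (Finsupp.single j 1) i

/-- `f` has finitely many nonzero entries in each row. Together with the
automatic column-finiteness this says `f` lies in `E₀`. -/
def RowFinite {F : Type*} [Field F] (f : EMat F) : Prop :=
  ∀ i : ℕ, {j : ℕ | entry f i j ≠ 0}.Finite

/-- `M_∞(F)`: the nonunital algebra of finitary matrices (finitely many
nonzero entries overall), i.e. endomorphisms killing all but finitely many
basis vectors. -/
def Mfin (F : Type*) [Field F] : NonUnitalSubalgebra F (EMat F) where
  carrier := {f | {j : ℕ | f (Finsupp.single j 1) ≠ 0}.Finite}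
  zero_mem' := by
    simp
  add_mem' := by
    intro a b ha hb
    refine ((ha.union hb).subset ?_)
    intro j hj
    simp only [Set.mem_setOf_eq, LinearMap.add_apply] at hj ⊢
    by_contra h
    try push_neg at h
    simp only [Set.mem_union, Set.mem_setOf_eq, not_or, not_not] at h
    rw [h.1, h.2, add_zero] at hj
    exact hj rfl
  mul_mem' := by
    intro a b ha hb
    refine hb.subset ?_
    intro j hj
    simp only [Set.mem_setOf_eq] at hj ⊢
    intro h
    apply hj
    show a (b (Finsupp.single j 1)) = 0
    rw [h]
    simp
  smul_mem' := by
    intro c a ha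
    refine ha.subset ?_
    intro j hj
    simp only [Set.mem_setOf_eq, LinearMap.smul_apply] at hj ⊢
    intro h
    rw [h] at hj
    simp at hj

instance (F : Type*) [Field F] : NonUnitalRing (Mfin F) :=
  NonUnitalSubalgebra.toNonUnitalRing (R := F) (A := EMat F) (Mfin F)

/-- The shift `c = Σ_{i} e_{i+1,i}` (sends basis vector `eᵢ` to `e_{i+1}`). -/
def cSh (F : Type*) [Field F] : EMat F :=
  Finsupp.lsum F fun i => Finsupp.lsingle (i + 1)

/-- The shift `c* = Σ_{i} e_{i,i+1}` (sends `e_{i+1}` to `eᵢ` and `e₀` to `0`). -/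
def cShStar (F : Type*) [Field F] : EMat F :=
  Finsupp.lsum F fun i => if i = 0 then 0 else Finsupp.lsingle (i - 1)

/-!
Multiplying `S c T - c* ∈ M_∞(F)` on the left by `T` shows that far out the columns of `T` are
shifted copies of each other: `c (T eⱼ₊₁) = T eⱼ` for `j ≥ b`. Hence `T e_b = cᵏ (T e_{b+k})` for
every `k`, so the first `k` coordinates of `T e_b` vanish for every `k`, i.e. `T e_b = 0`,
contradicting the injectivity of `T`.
-/

lemma cSh_eq_lmapDomain (F : Type*) [Field F] :
    cSh F = Finsupp.lmapDomain F F (· + 1) := by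
  ext j : 2
  simp [cSh]

lemma cSh_apply_zero {F : Type*} [Field F] (v : ℕ →₀ F) : cSh F v 0 = 0 := by
  rw [cSh_eq_lmapDomain]
  exact Finsupp.mapDomain_of_notMem_range _ _ (by rintro ⟨x, hx⟩; exact Nat.succ_ne_zero x hx)

lemma cSh_apply_succ {F : Type*} [Field F] (v : ℕ →₀ F) (i : ℕ) :
    cSh F v (i + 1) = v i := by
  rw [cSh_eq_lmapDomain]
  exact Finsupp.mapDomain_apply (add_left_injective 1) v i

lemma cSh_pow_apply_of_lt {F : Type*} [Field F] {k i : ℕ} (hik : i < k) (v : ℕ →₀ F) :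
    (cSh F ^ k) v i = 0 := by
  induction k generalizing i with
  | zero => omega
  | succ k ih =>
    rw [pow_succ', Module.End.mul_apply]
    cases i with
    | zero => exact cSh_apply_zero _
    | succ i => rw [cSh_apply_succ, ih (by omega)]

lemma eq_zero_of_forall_mem_range_cSh_pow {F : Type*} [Field F] {v : ℕ →₀ F}
    (hv : ∀ k, v ∈ LinearMap.range (cSh F ^ k)) : v = 0 := by
  ext i
  obtain ⟨w, rfl⟩ := hv (i + 1)
  exact cSh_pow_apply_of_lt (Nat.lt_succ_self i) w

lemma cShStar_single_succ {F : Type*} [Field F] (j : ℕ) :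
    cShStar F (Finsupp.single (j + 1) 1) = Finsupp.single j 1 := by
  simp [cShStar]

lemma exists_forall_ge_apply_single_eq_zero_of_mem_Mfin {F : Type*} [Field F] {f : EMat F}
    (hf : f ∈ Mfin F) : ∃ b, ∀ j, b ≤ j → f (Finsupp.single j 1) = 0 := by
  obtain ⟨b, hb⟩ := Set.Finite.bddAbove (s := {j | f (Finsupp.single j 1) ≠ 0}) hf
  exact ⟨b + 1, fun j hj => not_not.mp fun h => absurd (hb h) (by omega)⟩

lemma Module.End.pow_apply_add_of_apply_succ {R M : Type*} [Semiring R] [AddCommMonoid M]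
    [Module R M] (f : Module.End R M) {v : ℕ → M} {b : ℕ}
    (hv : ∀ j, b ≤ j → f (v (j + 1)) = v j) (k : ℕ) : (f ^ k) (v (b + k)) = v b := by
  induction k with
  | zero => simp
  | succ k ih => rw [pow_succ, Module.End.mul_apply, ← add_assoc, hv _ (by omega), ih]

lemma exists_forall_ge_cSh_col_succ_eq_col {F : Type*} [Field F] {T S : EMat F} (hTS : T * S = 1)
    (hconj : S * cSh F * T - cShStar F ∈ Mfin F) :
    ∃ b, ∀ j, b ≤ j → cSh F (T (Finsupp.single (j + 1) 1)) = T (Finsupp.single j 1) := by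
  obtain ⟨b, hb⟩ := exists_forall_ge_apply_single_eq_zero_of_mem_Mfin hconj
  refine ⟨b, fun j hj => ?_⟩
  have hcol : S (cSh F (T (Finsupp.single (j + 1) 1))) = Finsupp.single j 1 := by
    have h := hb (j + 1) (by omega)
    rwa [LinearMap.sub_apply, Module.End.mul_apply, Module.End.mul_apply, sub_eq_zero,
      cShStar_single_succ] at h
  rw [← hcol, ← Module.End.mul_apply T, hTS, Module.End.one_apply]

/-- There is no invertible `T` in the algebra `E` of column-finite matrices
with `T⁻¹ c T − c* ∈ M_∞(F)`. -/
theorem no_conjugation_c_to_cstar (F : Type*) [Field F] (T S : EMat F)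
    (hTS : T * S = 1) (hST : S * T = 1)
    (hconj : S * cSh F * T - cShStar F ∈ Mfin F) : False := by
  obtain ⟨b, hshift⟩ := exists_forall_ge_cSh_col_succ_eq_col hTS hconj
  have hTb : T (Finsupp.single b 1) = 0 := eq_zero_of_forall_mem_range_cSh_pow fun k =>
    ⟨_, (cSh F).pow_apply_add_of_apply_succ (v := fun j => T (Finsupp.single j 1)) hshift k⟩
  have hT_inj : Function.Injective T := fun x y h => by
    simpa [← Module.End.mul_apply S, hST] using congrArg S h
  exact one_ne_zero (Finsupp.single_eq_zero.mp (hT_inj (hTb.trans T.map_zero.symm)))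

end
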